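/- arXiv:2406.04899 — 2 statements merged into one kernel-verified Lean document; each statement's English description precedes it below -/
import Mathlib

section
/- Multiplicative drift theorem: Let (X_t)_{t≥0} be a stochastic process on {0} ∪ [s_min, ∞) with s_min ≥ 1, adapted to a filtration, such that E[X_t − X_{t+1} | X_t] ≥ δ·X_t for some δ > 0 whenever X_t > 0. Let T = min{t : X_t = 0}. Then E[T | X_0] ≤ (ln(X_0) + 1)/δ. -/
/-!
The potential `φ x = ln x + 1` (with `φ 0 = 0`) satisfies `(a - b) / a ≤ φ a - φ b` on
`{0} ∪ [1, ∞)`, which is `ln y ≤ y - 1` for `y = b / a`. Since `X t` is `ℱ t`-measurable, the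
drift condition can be divided by `X t`, so the multiplicative drift of `X` becomes an additive
drift `δ` of `φ ∘ X` as long as the process has not hit `0`. With `A t` the event of survival up
to time `t` and `g t = E[φ (X t); A t] ≥ 0` this reads `δ P(A t) ≤ g t - g (t + 1)`, and
telescoping gives `E[T] = ∑ₜ P(A t) ≤ g 0 / δ ≤ (ln X₀ + 1) / δ`.
-/

open MeasureTheory Finset
open scoped ENNReal

noncomputable def driftPotential (x : ℝ) : ℝ :=
  if x = 0 then 0 else Real.log x + 1

lemma measurable_driftPotential : Measurable driftPotential :=
  Measurable.ite (measurableSet_singleton 0) measurable_const (Real.measurable_log.add_const 1)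

lemma driftPotential_nonneg {x : ℝ} (hx : x = 0 ∨ 1 ≤ x) : 0 ≤ driftPotential x := by
  unfold driftPotential
  split_ifs with h
  · rfl
  · linarith [Real.log_nonneg (hx.resolve_left h)]

lemma driftPotential_le_abs (x : ℝ) : driftPotential x ≤ |x| := by
  unfold driftPotential
  split_ifs with h
  · exact abs_nonneg x
  · rw [← Real.log_abs]
    linarith [Real.log_le_sub_one_of_pos (abs_pos.mpr h)]

lemma driftPotential_le_log_add_one (x : ℝ) : driftPotential x ≤ Real.log x + 1 := by
  unfold driftPotential
  split_ifs with h
  · simp [h]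
  · rfl

lemma sub_div_le_driftPotential_sub {a b : ℝ} (ha : 1 ≤ a) (hb : b = 0 ∨ 1 ≤ b) :
    (a - b) / a ≤ driftPotential a - driftPotential b := by
  have ha₀ : 0 < a := one_pos.trans_le ha
  rw [driftPotential, if_neg ha₀.ne', sub_div, div_self ha₀.ne']
  rcases hb with rfl | hb
  · simp only [driftPotential, if_pos, zero_div]
    linarith [Real.log_nonneg ha]
  · have hb₀ : 0 < b := one_pos.trans_le hb
    have hlog := Real.log_le_sub_one_of_pos (div_pos hb₀ ha₀)
    rw [Real.log_div hb₀.ne' ha₀.ne'] at hlog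
    rw [driftPotential, if_neg hb₀.ne']
    linarith

lemma sum_range_le_div_of_mul_le_sub {a g : ℕ → ℝ} {δ : ℝ} (hδ : 0 < δ) (hg : ∀ t, 0 ≤ g t)
    (h : ∀ t, δ * a t ≤ g t - g (t + 1)) (n : ℕ) : ∑ t ∈ range n, a t ≤ g 0 / δ := by
  have htelescope := sum_le_sum fun t (_ : t ∈ range n) => h t
  rw [← mul_sum, sum_range_sub'] at htelescope
  rw [le_div_iff₀ hδ, mul_comm]
  linarith [hg n]

lemma ENNReal.tsum_le_ofReal_div_of_mul_toReal_le_sub {a : ℕ → ℝ≥0∞} (ha : ∀ t, a t ≠ ∞)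
    {g : ℕ → ℝ} {δ : ℝ} (hδ : 0 < δ) (hg : ∀ t, 0 ≤ g t)
    (h : ∀ t, δ * (a t).toReal ≤ g t - g (t + 1)) : ∑' t, a t ≤ ENNReal.ofReal (g 0 / δ) :=
  ENNReal.tsum_le_of_sum_range_le fun n => by
    rw [ENNReal.le_ofReal_iff_toReal_le (ENNReal.sum_ne_top.2 fun t _ => ha t)
      (div_nonneg (hg 0) hδ.le), ENNReal.toReal_sum fun t _ => ha t]
    exact sum_range_le_div_of_mul_le_sub hδ hg h n

-- If `P` never holds, both sides are `∞` (`sInf ∅ = ⊤`).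
lemma sInf_natCast_eq_tsum_indicator (P : ℕ → Prop) :
    sInf {r : ℝ≥0∞ | ∃ t : ℕ, r = t ∧ P t} = ∑' t, {t | ∀ s ≤ t, ¬ P s}.indicator 1 t := by
  classical
  by_cases h : ∃ t, P t
  · have hset : {t | ∀ s ≤ t, ¬ P s} = (range (Nat.find h) : Set ℕ) := by
      ext t
      simp [Nat.lt_find_iff]
    have hinf : sInf {r : ℝ≥0∞ | ∃ t : ℕ, r = t ∧ P t} = Nat.find h :=
      le_antisymm (sInf_le ⟨_, rfl, Nat.find_spec h⟩)
        (le_sInf fun _ ⟨t, hr, ht⟩ => hr ▸ Nat.cast_le.2 (Nat.find_min' h ht))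
    rw [hinf, hset, tsum_eq_sum (s := range _) fun t ht => Set.indicator_of_notMem ht _,
      sum_congr rfl fun t ht => Set.indicator_of_mem (mem_coe.2 ht) _]
    simp
  · simp_all

section

variable {Ω : Type*} {m : MeasurableSpace Ω} {μ : Measure Ω} {X : ℕ → Ω → ℝ}

lemma integrable_driftPotential_comp {f : Ω → ℝ} (hf : Integrable f μ)
    (hrange : ∀ ω, f ω = 0 ∨ 1 ≤ f ω) :
    Integrable (fun ω => driftPotential (f ω)) μ :=
  hf.mono (measurable_driftPotential.comp_aemeasurable hf.aemeasurable).aestronglyMeasurable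
    (ae_of_all _ fun ω => by
      rw [Real.norm_of_nonneg (driftPotential_nonneg (hrange ω)), Real.norm_eq_abs]
      exact driftPotential_le_abs _)

lemma integrableOn_div_of_le {A : Set Ω} {W Y : Ω → ℝ} {c : ℝ} (hA : MeasurableSet A)
    (hW : Integrable W μ) (hY : AEMeasurable Y μ) (hc : 0 < c) (hYc : ∀ ω ∈ A, c ≤ Y ω) :
    IntegrableOn (fun ω => W ω / Y ω) A μ := by
  simp_rw [div_eq_mul_inv]
  refine hW.integrableOn.mul_bdd hY.inv.restrict.aestronglyMeasurable (c := c⁻¹)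
    (ae_restrict_of_forall_mem hA ?_)
  intro ω hω
  rw [norm_inv, Real.norm_of_nonneg (hc.le.trans (hYc ω hω))]
  exact inv_anti₀ hc (hYc ω hω)

lemma mul_measureReal_le_setIntegral_div_of_le_condExp [IsFiniteMeasure μ]
    {m' : MeasurableSpace Ω} (hm : m' ≤ m) {A : Set Ω} (hA : MeasurableSet[m'] A)
    {W Y : Ω → ℝ} {c δ : ℝ} (hW : Integrable W μ) (hY : Measurable[m'] Y) (hc : 0 < c)
    (hYc : ∀ ω ∈ A, c ≤ Y ω) (hdrift : ∀ᵐ ω ∂μ, ω ∈ A → δ * Y ω ≤ μ[W | m'] ω) :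
    δ * μ.real A ≤ ∫ ω in A, W ω / Y ω ∂μ := by
  set f := A.indicator fun ω => (Y ω)⁻¹ with hf
  have hf_bound : ∀ ω, ‖f ω‖ ≤ c⁻¹ := by
    intro ω
    by_cases hω : ω ∈ A
    · rw [hf, Set.indicator_of_mem hω, norm_inv, Real.norm_of_nonneg (hc.le.trans (hYc ω hω))]
      exact inv_anti₀ hc (hYc ω hω)
    · rw [hf, Set.indicator_of_notMem hω, norm_zero]
      positivity
  have hpull : μ[f * W | m'] =ᵐ[μ] f * μ[W | m'] :=
    condExp_stronglyMeasurable_mul_of_bound hm (hY.inv.indicator hA).stronglyMeasurable hW _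
      (ae_of_all _ hf_bound)
  have hle : A.indicator (fun _ => δ) ≤ᵐ[μ] f * μ[W | m'] := by
    filter_upwards [hdrift] with ω hω
    by_cases hωA : ω ∈ A
    · have hY₀ : 0 < Y ω := hc.trans_le (hYc ω hωA)
      rw [Set.indicator_of_mem hωA, Pi.mul_apply, hf, Set.indicator_of_mem hωA,
        ← div_eq_inv_mul, le_div_iff₀ hY₀]
      exact hω hωA
    · simp [f, hωA]
  calc δ * μ.real A = ∫ ω, A.indicator (fun _ => δ) ω ∂μ := by
        rw [integral_indicator_const δ (hm A hA), smul_eq_mul, mul_comm]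
    _ ≤ ∫ ω, (f * μ[W | m']) ω ∂μ :=
        integral_mono_ae ((integrable_const δ).indicator (hm A hA))
          (integrable_condExp.congr hpull) hle
    _ = ∫ ω, (f * W) ω ∂μ := by rw [← integral_congr_ae hpull, integral_condExp hm]
    _ = ∫ ω in A, W ω / Y ω ∂μ := by
        rw [← integral_indicator (hm A hA)]
        congr with ω
        by_cases hω : ω ∈ A <;> simp [f, hω, div_eq_inv_mul]

def survivalSet (X : ℕ → Ω → ℝ) (t : ℕ) : Set Ω :=
  {ω | ∀ s ≤ t, X s ω ≠ 0}

lemma antitone_survivalSet : Antitone (survivalSet X) :=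
  fun _ _ hst _ hω s hs => hω s (hs.trans hst)

lemma measurableSet_survivalSet {m' : MeasurableSpace Ω} {t : ℕ}
    (hX : ∀ s ≤ t, Measurable[m'] (X s)) : MeasurableSet[m'] (survivalSet X t) := by
  have : survivalSet X t = ⋂ s ∈ Set.Iic t, X s ⁻¹' {0}ᶜ := by
    ext
    simp [survivalSet]
  rw [this]
  exact .biInter (Set.to_countable _) fun s hs => hX s hs (measurableSet_singleton 0).compl

lemma lintegral_hittingTime_eq_tsum (hX : ∀ t, Measurable (X t)) :
    ∫⁻ ω, sInf {r : ℝ≥0∞ | ∃ t : ℕ, r = t ∧ X t ω = 0} ∂μ = ∑' t, μ (survivalSet X t) := by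
  have hA : ∀ t, MeasurableSet (survivalSet X t) := fun t =>
    measurableSet_survivalSet fun s _ => hX s
  simp_rw [sInf_natCast_eq_tsum_indicator]
  change ∫⁻ ω, ∑' t, (survivalSet X t).indicator 1 ω ∂μ = _
  rw [lintegral_tsum fun t => (measurable_one.indicator (hA t)).aemeasurable]
  exact tsum_congr fun t => lintegral_indicator_one (hA t)

lemma mul_measureReal_survivalSet_le_sub [IsFiniteMeasure μ] {ℱ : Filtration ℕ m}
    (hadapted : Adapted ℱ X) (hint : ∀ t, Integrable (X t) μ)
    (hrange : ∀ t ω, X t ω = 0 ∨ 1 ≤ X t ω) {δ : ℝ} {t : ℕ}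
    (hdrift : ∀ᵐ ω ∂μ, 0 < X t ω → δ * X t ω ≤ (μ[fun ω' => X t ω' - X (t + 1) ω' | ℱ t]) ω) :
    δ * μ.real (survivalSet X t) ≤
      ∫ ω in survivalSet X t, driftPotential (X t ω) ∂μ -
        ∫ ω in survivalSet X (t + 1), driftPotential (X (t + 1) ω) ∂μ := by
  have hAℱ : MeasurableSet[ℱ t] (survivalSet X t) :=
    measurableSet_survivalSet fun s hs => (hadapted s).mono (ℱ.mono hs) le_rfl
  have hA : MeasurableSet (survivalSet X t) := ℱ.le t _ hAℱ
  have hone : ∀ ω ∈ survivalSet X t, 1 ≤ X t ω := fun ω hω =>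
    (hrange t ω).resolve_left (hω t le_rfl)
  have hφ : ∀ s, Integrable (fun ω => driftPotential (X s ω)) μ := fun s =>
    integrable_driftPotential_comp (hint s) (hrange s)
  calc δ * μ.real (survivalSet X t)
      ≤ ∫ ω in survivalSet X t, (X t ω - X (t + 1) ω) / X t ω ∂μ :=
        mul_measureReal_le_setIntegral_div_of_le_condExp (ℱ.le t) hAℱ
          ((hint t).sub (hint (t + 1))) (hadapted t) one_pos hone
          (hdrift.mono fun ω h hω => h (one_pos.trans_le (hone ω hω)))
    _ ≤ ∫ ω in survivalSet X t, (driftPotential (X t ω) - driftPotential (X (t + 1) ω)) ∂μ :=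
        setIntegral_mono_on
          (integrableOn_div_of_le hA ((hint t).sub (hint (t + 1))) (hint t).aemeasurable
            one_pos hone)
          ((hφ t).sub (hφ (t + 1))).integrableOn hA
          fun ω hω => sub_div_le_driftPotential_sub (hone ω hω) (hrange (t + 1) ω)
    _ = ∫ ω in survivalSet X t, driftPotential (X t ω) ∂μ -
          ∫ ω in survivalSet X t, driftPotential (X (t + 1) ω) ∂μ :=
        integral_sub (hφ t).integrableOn (hφ (t + 1)).integrableOn
    _ ≤ _ :=
        sub_le_sub_left (setIntegral_mono_set (hφ (t + 1)).integrableOn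
          (ae_of_all _ fun ω => driftPotential_nonneg (hrange (t + 1) ω))
          (antitone_survivalSet t.le_succ).eventuallyLE) _

end

/-- Multiplicative drift theorem (Doerr, Johannsen, Winzen): a nonnegative process on
`{0} ∪ [s_min, ∞)` with multiplicative drift `δ` hits `0` in expected time at most
`(ln X₀ + 1)/δ`. -/
theorem stmt_8 {Ω : Type*} {m : MeasurableSpace Ω} (μ : Measure Ω) [IsProbabilityMeasure μ]
    (ℱ : Filtration ℕ m) (X : ℕ → Ω → ℝ) (hadapted : Adapted ℱ X)
    (hint : ∀ t, Integrable (X t) μ)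
    (smin : ℝ) (hsmin : 1 ≤ smin)
    (hrange : ∀ t ω, X t ω = 0 ∨ smin ≤ X t ω)
    (δ : ℝ) (hδ : 0 < δ)
    (hdrift : ∀ t, ∀ᵐ ω ∂μ, 0 < X t ω →
      δ * X t ω ≤ (μ[fun ω' => X t ω' - X (t + 1) ω' | ℱ t]) ω)
    (x0 : ℝ) (hx0 : ∀ ω, X 0 ω = x0) :
    ∫⁻ ω, sInf {r : ℝ≥0∞ | ∃ t : ℕ, r = t ∧ X t ω = 0} ∂μ ≤
      ENNReal.ofReal ((Real.log x0 + 1) / δ) := by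
  have hrange₁ : ∀ t ω, X t ω = 0 ∨ 1 ≤ X t ω := fun t ω => (hrange t ω).imp_right hsmin.trans
  set g : ℕ → ℝ := fun t => ∫ ω in survivalSet X t, driftPotential (X t ω) ∂μ
  have hg0 : g 0 ≤ Real.log x0 + 1 :=
    calc g 0 ≤ ∫ ω, driftPotential (X 0 ω) ∂μ :=
          setIntegral_le_integral (integrable_driftPotential_comp (hint 0) (hrange₁ 0))
            (ae_of_all _ fun ω => driftPotential_nonneg (hrange₁ 0 ω))
      _ = driftPotential x0 := by simp [hx0]
      _ ≤ Real.log x0 + 1 := driftPotential_le_log_add_one x0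
  rw [lintegral_hittingTime_eq_tsum fun t => (hadapted t).mono (ℱ.le t) le_rfl]
  calc ∑' t, μ (survivalSet X t) ≤ ENNReal.ofReal (g 0 / δ) :=
        ENNReal.tsum_le_ofReal_div_of_mul_toReal_le_sub (fun t => measure_ne_top μ _) hδ
          (fun t => setIntegral_nonneg_of_ae_restrict
            (ae_of_all _ fun ω => driftPotential_nonneg (hrange₁ t ω)))
          fun t => mul_measureReal_survivalSet_le_sub hadapted hint hrange₁ (hdrift t)
    _ ≤ ENNReal.ofReal ((Real.log x0 + 1) / δ) := by gcongr
end

section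
/- Let α ∈ [1/2, 1), so K_α ≥ 0. Suppose a population P ⊆ {0,1}^n contains, for every k ∈ {0,…,n} and every λ ∈ [0,1], some minimizer of f_λ(x) = λμ(x) + (1−λ)v(x) over {x : |x|_1 = k}. Then P contains, for every k, a minimizer of ŵ(x) = μ(x) + K_α·√(v(x)) over {x : |x|_1 = k}, and hence an optimal solution to minimizing ŵ(x) subject to |x|_1 ≥ k for every k. -/
/-!
Let `T₀` minimize `ŵ = μ + K √v` among the `k`-sets. Since `√` is concave, it lies below its
tangent at `v(T₀)`, so with `t = K / (2 √v(T₀))` we get `ŵ ≤ μ + t v + const`, with equality at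
`T₀`. A minimizer of the scalarization with `λ = 1 / (1 + t)`, i.e. of `μ + t v`, therefore has
`ŵ` at most `ŵ(T₀)`. For the constraint `|x|₁ ≥ k` it suffices that `ŵ` grows with the set.
-/

open Finset Set

theorem Real.sqrt_le_sqrt_add_sub_div {x y : ℝ} (hx : 0 ≤ x) (hy : 0 < y) :
    √x ≤ √y + (x - y) / (2 * √y) := by
  have hsy : 0 < √y := Real.sqrt_pos.mpr hy
  rw [← sub_le_iff_le_add', le_div_iff₀ (by positivity)]
  nlinarith [Real.sq_sqrt hx, Real.sq_sqrt hy.le, sq_nonneg (√x - √y)]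

theorem add_mul_sqrt_le_of_add_mul_le {K m v m₀ v₀ : ℝ} (hK : 0 ≤ K) (hv : 0 ≤ v) (hv₀ : 0 < v₀)
    (h : m + K / (2 * √v₀) * v ≤ m₀ + K / (2 * √v₀) * v₀) :
    m + K * √v ≤ m₀ + K * √v₀ :=
  calc m + K * √v ≤ m + K * (√v₀ + (v - v₀) / (2 * √v₀)) := by
        gcongr; exact Real.sqrt_le_sqrt_add_sub_div hv hv₀
    _ = m + K / (2 * √v₀) * v - K / (2 * √v₀) * v₀ + K * √v₀ := by ring
    _ ≤ m₀ + K * √v₀ := by linarith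

theorem add_mul_le_of_scalarization_le {t a b c d : ℝ} (ht : 0 ≤ t)
    (h : (1 + t)⁻¹ * a + (1 - (1 + t)⁻¹) * b ≤ (1 + t)⁻¹ * c + (1 - (1 + t)⁻¹) * d) :
    a + t * b ≤ c + t * d := by
  have h₁ : (1 + t)⁻¹ * (a + t * b) ≤ (1 + t)⁻¹ * (c + t * d) := by
    convert h using 1 <;> field_simp <;> ring
  exact le_of_mul_le_mul_left h₁ (by positivity)

theorem exists_mem_isMinOn_add_mul_sqrt {α : Type*} {F : Set α} (hF : F.Finite)
    (hne : F.Nonempty) {m v : α → ℝ} (hv : ∀ T ∈ F, 0 < v T) {K : ℝ} (hK : 0 ≤ K) (P : Set α)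
    (hP : ∀ lam ∈ Icc (0 : ℝ) 1,
      ∃ S ∈ P, S ∈ F ∧ IsMinOn (fun T ↦ lam * m T + (1 - lam) * v T) F S) :
    ∃ S ∈ P, S ∈ F ∧ IsMinOn (fun T ↦ m T + K * √(v T)) F S := by
  obtain ⟨T₀, hT₀, hT₀min⟩ := F.exists_min_image (fun T ↦ m T + K * √(v T)) hF hne
  set t := K / (2 * √(v T₀))
  have ht : 0 ≤ t := by positivity
  obtain ⟨S, hSP, hS, hSmin⟩ :=
    hP (1 + t)⁻¹ ⟨by positivity, inv_le_one_of_one_le₀ (by linarith)⟩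
  refine ⟨S, hSP, hS, isMinOn_iff.mpr fun T hT ↦ le_trans ?_ (hT₀min T hT)⟩
  exact add_mul_sqrt_le_of_add_mul_le hK (hv S hS).le (hv T₀ hT₀)
    (add_mul_le_of_scalarization_le ht (isMinOn_iff.mp hSmin T₀ hT₀))

theorem monotone_sum_add_mul_sqrt_sum {ι : Type*} {a b : ι → ℝ} (ha : 0 ≤ a) (hb : 0 ≤ b)
    {K : ℝ} (hK : 0 ≤ K) : Monotone fun T : Finset ι ↦ ∑ i ∈ T, a i + K * √(∑ i ∈ T, b i) := by
  intro A B hAB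
  beta_reduce
  gcongr
  exacts [fun i _ _ ↦ ha i, fun i _ _ ↦ hb i]

theorem Monotone.isMinOn_card_ge {ι β : Type*} [Preorder β] {f : Finset ι → β} (hf : Monotone f)
    {k : ℕ} {S : Finset ι} (hS : IsMinOn f {T | T.card = k} S) :
    IsMinOn f {T | k ≤ T.card} S := by
  refine isMinOn_iff.mpr fun T hT ↦ ?_
  obtain ⟨U, hUT, hU⟩ := exists_subset_card_eq hT
  exact (isMinOn_iff.mp hS U hU).trans (hf hUT)

theorem exists_mem_isMinOn_card_eq {ι : Type*} [Fintype ι] {a b : ι → ℝ} (hb : ∀ i, 0 < b i)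
    {K : ℝ} (hK : 0 ≤ K) (P : Set (Finset ι)) {k : ℕ} (hk : k ≤ Fintype.card ι)
    (hP : ∀ lam ∈ Icc (0 : ℝ) 1, ∃ S ∈ P, S.card = k ∧
      IsMinOn (fun T ↦ lam * ∑ i ∈ T, a i + (1 - lam) * ∑ i ∈ T, b i) {T | T.card = k} S) :
    ∃ S ∈ P, S.card = k ∧
      IsMinOn (fun T ↦ ∑ i ∈ T, a i + K * √(∑ i ∈ T, b i)) {T | T.card = k} S := by
  rcases k.eq_zero_or_pos with rfl | hk₀
  · obtain ⟨S, hSP, hS, -⟩ := hP 1 ⟨zero_le_one, le_rfl⟩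
    refine ⟨S, hSP, hS, isMinOn_iff.mpr fun T hT ↦ ?_⟩
    rw [card_eq_zero.mp hS, card_eq_zero.mp hT]
  refine exists_mem_isMinOn_add_mul_sqrt (toFinite _) ?_ (fun T hT ↦ ?_) hK P hP
  · obtain ⟨T, -, hT⟩ := exists_subset_card_eq (s := univ) (by simpa using hk)
    exact ⟨T, hT⟩
  · exact sum_pos (fun i _ ↦ hb i) (card_pos.mp (hT ▸ hk₀))

/-- If a population contains, for every `k` and every `λ ∈ [0,1]`, a minimizer of the
linear scalarization `f_λ` among `k`-element solutions, then it contains, for every `k`,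
a minimizer of `ŵ(x) = μ(x) + K_α √(v(x))` among `k`-element solutions, and an optimal
solution of minimizing `ŵ` subject to `|x|₁ ≥ k`. -/
theorem stmt_16 (n : ℕ) (μw σsq : Fin n → ℝ) (hμ : ∀ i, 1 ≤ μw i) (hσ : ∀ i, 1 ≤ σsq i)
    (K : ℝ) (hK : 0 ≤ K)
    (P : Finset (Finset (Fin n)))
    (hP : ∀ k ≤ n, ∀ lam : ℝ, 0 ≤ lam → lam ≤ 1 →
      ∃ S ∈ P, S.card = k ∧ ∀ T : Finset (Fin n), T.card = k →
        lam * (∑ i ∈ S, μw i) + (1 - lam) * (∑ i ∈ S, σsq i) ≤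
          lam * (∑ i ∈ T, μw i) + (1 - lam) * (∑ i ∈ T, σsq i)) :
    ∀ k ≤ n,
      (∃ S ∈ P, S.card = k ∧ ∀ T : Finset (Fin n), T.card = k →
        (∑ i ∈ S, μw i) + K * Real.sqrt (∑ i ∈ S, σsq i) ≤
          (∑ i ∈ T, μw i) + K * Real.sqrt (∑ i ∈ T, σsq i)) ∧
      (∃ S ∈ P, k ≤ S.card ∧ ∀ T : Finset (Fin n), k ≤ T.card →
        (∑ i ∈ S, μw i) + K * Real.sqrt (∑ i ∈ S, σsq i) ≤
          (∑ i ∈ T, μw i) + K * Real.sqrt (∑ i ∈ T, σsq i)) := by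
  intro k hk
  obtain ⟨S, hSP, hSk, hSmin⟩ :=
    exists_mem_isMinOn_card_eq (fun i ↦ one_pos.trans_le (hσ i)) hK (P : Set (Finset (Fin n)))
      (by simpa using hk) fun lam hlam ↦ by
        obtain ⟨S, hSP, hSk, hS⟩ := hP k hk lam hlam.1 hlam.2
        exact ⟨S, hSP, hSk, isMinOn_iff.mpr hS⟩
  have hmono := monotone_sum_add_mul_sqrt_sum (fun i ↦ zero_le_one.trans (hμ i))
    (fun i ↦ zero_le_one.trans (hσ i)) hK
  exact ⟨⟨S, hSP, hSk, isMinOn_iff.mp hSmin⟩,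
    ⟨S, hSP, hSk.ge, isMinOn_iff.mp (hmono.isMinOn_card_ge hSmin)⟩⟩
end
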